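/- arXiv:2006.00287 — 2 statements merged into one kernel-verified Lean document; each statement's English description precedes it below -/
import Mathlib

section
/- Let R be an associative ring with identity in which 3 is a unit, and let k ≥ 1. Then (R^[3])^k ⊆ R^[2k+1], i.e. every product of k elements of R^[3] lies in R^[2k+1]. -/
/-- The left-normed iterated Lie commutator `[x, l₁, l₂, …, l_k]`
where `[a, b] = a * b - b * a`. -/
def leftNormedLie {R : Type*} [Ring R] (x : R) (l : List R) : R :=
  l.foldl (fun a b => a * b - b * a) x

/-- `lieTerm R n` is `R^[n]`: for `n ≥ 2`, the two-sided ideal of `R` generated by all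
left-normed Lie commutators `[x₁, …, xₙ]` of ring elements; `R^[1] = R` (and `R^[0] = R`). -/
def lieTerm (R : Type*) [Ring R] (n : ℕ) : TwoSidedIdeal R :=
  if n ≤ 1 then ⊤
  else TwoSidedIdeal.span
    {r : R | ∃ (x : R) (l : List R), l.length = n - 1 ∧ r = leftNormedLie x l}

/-- `strongLieTerm R n` is `R^(n)`: `R^(1) = R` and for `n ≥ 2`, the two-sided ideal of `R`
generated by all `[x, y]` with `x ∈ R^(n-1)` and `y ∈ R`. -/
def strongLieTerm (R : Type*) [Ring R] : ℕ → TwoSidedIdeal R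
  | 0 => ⊤
  | 1 => ⊤
  | n + 2 => TwoSidedIdeal.span
      {r : R | ∃ x, x ∈ strongLieTerm R (n + 1) ∧ ∃ y : R, r = x * y - y * x}

/-- A ring is Lie nilpotent if `R^[n] = 0` for some positive integer `n`. -/
def IsLieNilpotentRing (R : Type*) [Ring R] : Prop :=
  ∃ n : ℕ, 0 < n ∧ lieTerm R n = ⊥

/-- The lower Lie nilpotency index `t_L(R)`: the minimal positive `n` with `R^[n] = 0`. -/
noncomputable def lowerLieIndex (R : Type*) [Ring R] : ℕ :=
  sInf {n : ℕ | 0 < n ∧ lieTerm R n = ⊥}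

/-- The upper Lie nilpotency index `t^L(R)`: the minimal positive `n` with `R^(n) = 0`. -/
noncomputable def upperLieIndex (R : Type*) [Ring R] : ℕ :=
  sInf {n : ℕ | 0 < n ∧ strongLieTerm R n = ⊥}

/-!
Suppose every `[w, a, b, c]` vanishes in a ring. Then each `[w, x, y]` is central and each
`[w, x]` commutes with all commutators. From this, `T(d, e, f) = [d, e, f] * [w, s]` changes sign
when `e` and `f` are swapped, so `T` is alternating, and the Jacobi identity
`T(d, e, f) + T(e, f, d) + T(f, d, e) = 0` gives `3 T = 0`.
Applied in `R ⧸ R^[n+3]` with `w` a left-normed commutator of weight `n`, this shows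
`R^[3] R^[n+1] ⊆ R^[n+3]` when `3` is a unit, and the theorem follows by induction on `k`.
-/
section LieCentral

variable {S : Type*} [Ring S] {w : S}

theorem lie_lie_lie_eq_zero (hw : ∀ a b c : S, ⁅⁅⁅w, a⁆, b⁆, c⁆ = 0) (x a b : S) :
    ⁅⁅w, x⁆, ⁅a, b⁆⁆ = 0 := by
  have jacobi : ⁅⁅w, x⁆, ⁅a, b⁆⁆ = ⁅⁅⁅w, x⁆, a⁆, b⁆ - ⁅⁅⁅w, x⁆, b⁆, a⁆ := by
    simp only [Ring.lie_def]; noncomm_ring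
  rw [jacobi, hw, hw, sub_zero]

theorem lie_lie_mul_lie_eq_neg (hw : ∀ a b c : S, ⁅⁅⁅w, a⁆, b⁆, c⁆ = 0) (x a b c : S) :
    ⁅⁅w, x⁆, b⁆ * ⁅a, c⁆ = -(⁅⁅w, x⁆, c⁆ * ⁅a, b⁆) := by
  have key : ⁅⁅w, x⁆, b⁆ * ⁅a, c⁆ + ⁅⁅w, x⁆, c⁆ * ⁅a, b⁆ =
      ⁅⁅w, x⁆, ⁅a, b * c⁆⁆ - ⁅⁅w, x⁆, ⁅a, b⁆⁆ * c - b * ⁅⁅w, x⁆, ⁅a, c⁆⁆ +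
        ⁅⁅⁅w, x⁆, c⁆, ⁅a, b⁆⁆ := by
    simp only [Ring.lie_def]; noncomm_ring
  rw [lie_lie_lie_eq_zero hw, lie_lie_lie_eq_zero hw, lie_lie_lie_eq_zero hw, hw] at key
  simpa [eq_neg_iff_add_eq_zero] using key

theorem lie_lie_mul_lie_eq_neg_swap_right (hw : ∀ a b c : S, ⁅⁅⁅w, a⁆, b⁆, c⁆ = 0)
    (d e f s : S) : ⁅⁅d, e⁆, f⁆ * ⁅w, s⁆ = -(⁅⁅d, e⁆, s⁆ * ⁅w, f⁆) := by
  have key : ⁅⁅d, e⁆, f⁆ * ⁅w, s⁆ + ⁅⁅d, e⁆, s⁆ * ⁅w, f⁆ =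
      -⁅⁅w, f * s⁆, ⁅d, e⁆⁆ + ⁅⁅⁅w, f⁆, s⁆, ⁅d, e⁆⁆ + f * ⁅⁅w, s⁆, ⁅d, e⁆⁆ +
        s * ⁅⁅w, f⁆, ⁅d, e⁆⁆ := by
    simp only [Ring.lie_def]; noncomm_ring
  rw [lie_lie_lie_eq_zero hw, lie_lie_lie_eq_zero hw, lie_lie_lie_eq_zero hw, hw] at key
  simpa [eq_neg_iff_add_eq_zero] using key

theorem lie_lie_mul_lie_eq_neg_swap_left (hw : ∀ a b c : S, ⁅⁅⁅w, a⁆, b⁆, c⁆ = 0)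
    (d e f s : S) : ⁅⁅d, e⁆, s⁆ * ⁅w, f⁆ = -(⁅⁅d, f⁆, s⁆ * ⁅w, e⁆) := by
  -- expand `⁅⁅⁅w, f * e⁆, d⁆, s⁆ = 0`; the two bracketed pairs cancel by `lie_lie_mul_lie_eq_neg`
  have key : ⁅⁅d, e⁆, s⁆ * ⁅w, f⁆ + ⁅⁅d, f⁆, s⁆ * ⁅w, e⁆ =
      -⁅⁅⁅w, f * e⁆, d⁆, s⁆ + ⁅⁅w, f⁆, ⁅⁅e, d⁆, s⁆⁆ +
        (⁅⁅w, f⁆, s⁆ * ⁅e, d⁆ + ⁅⁅w, f⁆, d⁆ * ⁅e, s⁆) +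
        (⁅⁅w, e⁆, d⁆ * ⁅f, s⁆ + ⁅⁅w, e⁆, s⁆ * ⁅f, d⁆) +
        ⁅⁅⁅w, f⁆, d⁆, s⁆ * e + f * ⁅⁅⁅w, e⁆, d⁆, s⁆ -
        ⁅⁅⁅w, e⁆, d⁆, ⁅f, s⁆⁆ - ⁅⁅⁅w, e⁆, s⁆, ⁅f, d⁆⁆ := by
    simp only [Ring.lie_def]; noncomm_ring
  rw [lie_lie_mul_lie_eq_neg hw f e s d, lie_lie_mul_lie_eq_neg hw e f d s,
    lie_lie_lie_eq_zero hw] at key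
  simpa [hw, eq_neg_iff_add_eq_zero] using key

theorem lie_lie_mul_lie_eq_neg_swap (hw : ∀ a b c : S, ⁅⁅⁅w, a⁆, b⁆, c⁆ = 0) (d e f s : S) :
    ⁅⁅d, e⁆, f⁆ * ⁅w, s⁆ = -(⁅⁅d, f⁆, e⁆ * ⁅w, s⁆) := by
  rw [lie_lie_mul_lie_eq_neg_swap_right hw, lie_lie_mul_lie_eq_neg_swap_left hw,
    lie_lie_mul_lie_eq_neg_swap_right hw d f s e, neg_neg]

theorem three_mul_lie_lie_mul_lie_eq_zero (hw : ∀ a b c : S, ⁅⁅⁅w, a⁆, b⁆, c⁆ = 0)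
    (d e f s : S) : 3 * (⁅⁅d, e⁆, f⁆ * ⁅w, s⁆) = 0 := by
  have skew (a b c : S) : ⁅⁅a, b⁆, c⁆ = -⁅⁅b, a⁆, c⁆ := by
    simp only [Ring.lie_def]; noncomm_ring
  have jacobi : ⁅⁅d, e⁆, f⁆ + ⁅⁅e, f⁆, d⁆ + ⁅⁅f, d⁆, e⁆ = 0 := by
    simp only [Ring.lie_def]; noncomm_ring
  have h₁ : ⁅⁅e, f⁆, d⁆ * ⁅w, s⁆ = ⁅⁅d, e⁆, f⁆ * ⁅w, s⁆ := by
    rw [lie_lie_mul_lie_eq_neg_swap hw, skew e d, neg_mul, neg_neg]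
  have h₂ : ⁅⁅f, d⁆, e⁆ * ⁅w, s⁆ = ⁅⁅d, e⁆, f⁆ * ⁅w, s⁆ := by
    rw [skew f d, neg_mul, lie_lie_mul_lie_eq_neg_swap hw d f e, neg_neg]
  calc 3 * (⁅⁅d, e⁆, f⁆ * ⁅w, s⁆)
      = (⁅⁅d, e⁆, f⁆ + ⁅⁅e, f⁆, d⁆ + ⁅⁅f, d⁆, e⁆) * ⁅w, s⁆ := by
        rw [add_mul, add_mul, h₁, h₂]; noncomm_ring
    _ = 0 := by rw [jacobi, zero_mul]

theorem lie_lie_mul_mul_lie_eq_zero (h3 : IsUnit (3 : S))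
    (hw : ∀ a b c : S, ⁅⁅⁅w, a⁆, b⁆, c⁆ = 0) (d e f z s : S) :
    ⁅⁅d, e⁆, f⁆ * z * ⁅w, s⁆ = 0 := by
  have hws : ∀ a b c : S, ⁅⁅⁅⁅w, s⁆, a⁆, b⁆, c⁆ = 0 := by
    intro a b c
    rw [hw, Ring.lie_def, zero_mul, mul_zero, sub_zero]
  have commute : ⁅⁅d, e⁆, f⁆ * z * ⁅w, s⁆ =
      ⁅⁅d, e⁆, f⁆ * ⁅w, s⁆ * z - ⁅⁅d, e⁆, f⁆ * ⁅⁅w, s⁆, z⁆ := by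
    simp only [Ring.lie_def]; noncomm_ring
  rw [commute, h3.mul_right_eq_zero.1 (three_mul_lie_lie_mul_lie_eq_zero hw d e f s),
    h3.mul_right_eq_zero.1 (three_mul_lie_lie_mul_lie_eq_zero hws d e f z), zero_mul, sub_zero]

end LieCentral

theorem TwoSidedIdeal.mul_mem_of_mem_span {R : Type*} [Ring R] {s t : Set R}
    {I : TwoSidedIdeal R} (h : ∀ x ∈ s, ∀ y ∈ t, ∀ z, x * z * y ∈ I) {a b : R}
    (ha : a ∈ span s) (hb : b ∈ span t) : a * b ∈ I := by
  have hsb : ∀ x ∈ s, ∀ z, x * z * b ∈ I := by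
    intro x hx
    induction hb using span_induction with
    | mem y hy => exact h x hx y hy
    | zero => simp [I.zero_mem]
    | add y y' _ _ hy hy' => intro z; rw [mul_add]; exact I.add_mem (hy z) (hy' z)
    | neg y _ hy => intro z; rw [mul_neg]; exact I.neg_mem (hy z)
    | left_absorb q y _ hy => intro z; rw [← mul_assoc, mul_assoc x]; exact hy _
    | right_absorb q y _ hy => intro z; rw [← mul_assoc]; exact I.mul_mem_right _ _ (hy z)
  suffices ∀ z, a * z * b ∈ I by simpa using this 1
  induction ha using span_induction with
  | mem x hx => exact hsb x hx
  | zero => simp [I.zero_mem]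
  | add x x' _ _ hx hx' =>
    intro z; rw [add_mul, add_mul]; exact I.add_mem (hx z) (hx' z)
  | neg x _ hx => intro z; rw [neg_mul, neg_mul]; exact I.neg_mem (hx z)
  | left_absorb q x _ hx =>
    intro z; rw [mul_assoc q, mul_assoc q]; exact I.mul_mem_left _ _ (hx z)
  | right_absorb q x _ hx => intro z; rw [mul_assoc x q]; exact hx _

theorem TwoSidedIdeal.mk'_ringCon_eq_zero_iff {R : Type*} [Ring R] (I : TwoSidedIdeal R)
    (x : R) : I.ringCon.mk' x = 0 ↔ x ∈ I := by
  rw [← mem_ker, ker_ringCon_mk']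

theorem RingHom.map_lie {R S : Type*} [Ring R] [Ring S] (f : R →+* S) (x y : R) :
    f ⁅x, y⁆ = ⁅f x, f y⁆ := by
  simp only [Ring.lie_def, map_sub, map_mul]

section LieTerm

variable {R : Type*} [Ring R]

theorem leftNormedLie_append (x : R) (l₁ l₂ : List R) :
    leftNormedLie x (l₁ ++ l₂) = leftNormedLie (leftNormedLie x l₁) l₂ :=
  List.foldl_append

theorem leftNormedLie_mem_lieTerm (x : R) (l : List R) :
    leftNormedLie x l ∈ lieTerm R (l.length + 1) := by
  unfold lieTerm
  split_ifs
  · trivial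
  · exact TwoSidedIdeal.subset_span ⟨x, l, rfl, rfl⟩

theorem lieTerm_add_two (n : ℕ) :
    lieTerm R (n + 2) = TwoSidedIdeal.span
      {r | ∃ (x : R) (l : List R), l.length = n + 1 ∧ r = leftNormedLie x l} := by
  simp [lieTerm]

theorem mul_mem_lieTerm_add_three (h3 : IsUnit (3 : R)) {n : ℕ} {a b : R}
    (ha : a ∈ lieTerm R 3) (hb : b ∈ lieTerm R (n + 1)) : a * b ∈ lieTerm R (n + 3) := by
  obtain _ | m := n
  · exact (lieTerm R 3).mul_mem_right a b ha
  rw [lieTerm_add_two] at ha hb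
  refine TwoSidedIdeal.mul_mem_of_mem_span ?_ ha hb
  rintro _ ⟨d, l, hl, rfl⟩ _ ⟨x, l', hl', rfl⟩ z
  obtain ⟨e, f, rfl⟩ : ∃ e f, l = [e, f] := by
    match l, hl with | [e, f], _ => exact ⟨e, f, rfl⟩
  obtain ⟨t, s, rfl⟩ : ∃ t s, l' = t ++ [s] := by
    rcases l'.eq_nil_or_concat with rfl | ⟨t, s, rfl⟩
    · simp at hl'
    · exact ⟨t, s, by simp⟩
  set π := (lieTerm R (m + 1 + 3)).ringCon.mk'
  have hw : ∀ a b c : (lieTerm R (m + 1 + 3)).ringCon.Quotient,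
      ⁅⁅⁅π (leftNormedLie x t), a⁆, b⁆, c⁆ = 0 := by
    intro a b c
    obtain ⟨a, rfl⟩ := RingCon.mk'_surjective _ a
    obtain ⟨b, rfl⟩ := RingCon.mk'_surjective _ b
    obtain ⟨c, rfl⟩ := RingCon.mk'_surjective _ c
    have h := leftNormedLie_mem_lieTerm x (t ++ [a, b, c])
    rw [show (t ++ [a, b, c]).length + 1 = m + 1 + 3 by simp at hl' ⊢; omega,
      ← TwoSidedIdeal.mk'_ringCon_eq_zero_iff, leftNormedLie_append] at h
    change π ⁅⁅⁅leftNormedLie x t, a⁆, b⁆, c⁆ = 0 at h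
    simpa only [RingHom.map_lie] using h
  rw [← TwoSidedIdeal.mk'_ringCon_eq_zero_iff, leftNormedLie_append]
  change π (⁅⁅d, e⁆, f⁆ * z * ⁅leftNormedLie x t, s⁆) = 0
  simpa only [map_mul, RingHom.map_lie] using
    lie_lie_mul_mul_lie_eq_zero (h3.map π) hw (π d) (π e) (π f) (π z) (π s)

theorem prod_mem_lieTerm (h3 : IsUnit (3 : R)) (l : List R) (hl : ∀ x ∈ l, x ∈ lieTerm R 3) :
    l.prod ∈ lieTerm R (2 * l.length + 1) := by
  induction l with
  | nil => simp [lieTerm]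
  | cons a t ih =>
    rw [List.prod_cons, List.length_cons,
      show 2 * (t.length + 1) + 1 = 2 * t.length + 3 by ring]
    exact mul_mem_lieTerm_add_three h3 (hl a List.mem_cons_self)
      (ih fun x hx => hl x (List.mem_cons_of_mem a hx))

end LieTerm

theorem prod_lieTerm_three_pow_of_isUnit_three_general
    (R : Type*) [Ring R] (h3 : IsUnit (3 : R)) (k : ℕ) (l : List R)
    (hlen : l.length = k) (hmem : ∀ x ∈ l, x ∈ lieTerm R 3) :
    l.prod ∈ lieTerm R (2 * k + 1) :=
  hlen ▸ prod_mem_lieTerm h3 l hmem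

/-- If `3` is a unit of `R` and `k ≥ 1`, every product of `k` elements of `R^[3]`
lies in `R^[2k+1]`. -/
theorem prod_lieTerm_three_pow_of_isUnit_three
    (R : Type*) [Ring R] (h3 : IsUnit (3 : R)) (k : ℕ) (hk : 1 ≤ k) (l : List R)
    (hlen : l.length = k) (hmem : ∀ x ∈ l, x ∈ lieTerm R 3) :
    l.prod ∈ lieTerm R (2 * k + 1) :=
  prod_lieTerm_three_pow_of_isUnit_three_general R h3 k l hlen hmem
end

section
/- Let R be an associative ring with identity and let x, y be units of R. Then the following identity holds: (x,y,y) − 1 = (x,y)^{−1} y^{−1} ( x^{−1}y^{−1}[x,y,y] + x^{−1}[x,y][x,y,x^{−1}y^{−1}] − x^{−1}[x,y]^2 x^{−1}y^{−1} ). -/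
/-!
Writing `w = x⁻¹y⁻¹` and `d = [x,y]`, the group commutator is `(x,y) = 1 + w d`. Hence
`(x,y,y) - 1 = (x,y)⁻¹ y⁻¹ [(x,y), y] = (x,y)⁻¹ y⁻¹ [w d, y]`, and expanding `[w d, y]`
by the Leibniz rule with `[w, y] = -x⁻¹ d w` gives `w [d,y] - x⁻¹ d w d`, which is the
bracketed expression on the right-hand side.
-/

theorem Units.val_inv_mul_inv_mul_mul_sub_one {R : Type*} [Ring R] (a b : Rˣ) :
    ((a⁻¹ * b⁻¹ * a * b : Rˣ) : R) - 1 = ↑a⁻¹ * ↑b⁻¹ * (a * b - b * a) := by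
  have h : (↑a⁻¹ * ↑b⁻¹ * (↑b * ↑a) : R) = 1 := by simp [mul_assoc]
  simp only [Units.val_mul, mul_sub, h, ← mul_assoc]

/-- For units `x, y` of `R`, with `(x,y) = x⁻¹y⁻¹xy`, `(x,y,y) = ((x,y),y)` and
`[a,b] = ab - ba`, one has
`(x,y,y) - 1 = (x,y)⁻¹ y⁻¹ (x⁻¹y⁻¹[x,y,y] + x⁻¹[x,y][x,y,x⁻¹y⁻¹] - x⁻¹[x,y]² x⁻¹y⁻¹)`. -/
theorem group_comm_three_sub_one_identity
    (R : Type*) [Ring R] (x y : Rˣ) :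
    ((((x⁻¹ * y⁻¹ * x * y)⁻¹ * y⁻¹ * (x⁻¹ * y⁻¹ * x * y) * y : Rˣ) : R) - 1) =
      (((x⁻¹ * y⁻¹ * x * y)⁻¹ : Rˣ) : R) * ((y⁻¹ : Rˣ) : R) *
        (((x⁻¹ : Rˣ) : R) * ((y⁻¹ : Rˣ) : R) *
            ((((x : R) * y - (y : R) * x) * y) - (y : R) * ((x : R) * y - (y : R) * x)) +
          ((x⁻¹ : Rˣ) : R) * ((x : R) * y - (y : R) * x) *
            (((x : R) * y - (y : R) * x) * (((x⁻¹ : Rˣ) : R) * ((y⁻¹ : Rˣ) : R)) -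
              (((x⁻¹ : Rˣ) : R) * ((y⁻¹ : Rˣ) : R)) * ((x : R) * y - (y : R) * x)) -
          ((x⁻¹ : Rˣ) : R) * ((x : R) * y - (y : R) * x) ^ 2 *
            ((x⁻¹ : Rˣ) : R) * ((y⁻¹ : Rˣ) : R)) := by
  set c := x⁻¹ * y⁻¹ * x * y
  set d : R := x * y - y * x
  set w : R := ↑x⁻¹ * ↑y⁻¹
  have hc : (c : R) = 1 + w * d :=
    eq_add_of_sub_eq' (Units.val_inv_mul_inv_mul_mul_sub_one x y)
  have hwy : w * y - y * w = -(↑x⁻¹ * d * w) := by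
    simp only [w, d, mul_sub, sub_mul, mul_assoc, Units.inv_mul_cancel_left, Units.mul_inv,
      Units.inv_mul, Units.mul_inv_cancel_left, mul_one]
    abel
  have hcy : (c : R) * y - y * c = w * (d * y - y * d) - ↑x⁻¹ * d * w * d := by
    calc (c : R) * y - y * c = w * (d * y - y * d) + (w * y - y * w) * d := by
          rw [hc]; noncomm_ring
      _ = _ := by rw [hwy]; noncomm_ring
  rw [Units.val_inv_mul_inv_mul_mul_sub_one c y, hcy]
  noncomm_ring
end
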